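/- Define g(t) = (1/√(2π)) · exp(−t²/2) · (√(2/π) · exp(−t²/2) + 2t·Φ(t) − t) for t ∈ ℝ, where Φ is the standard normal CDF. Then g(t) ≤ 1/π + 1/√(2πe) < 1 for all t ∈ ℝ. -/
import Mathlib


open Real

theorem g_bound (Φ : ℝ → ℝ)
    (hΦ : ∀ t, Φ t = (Real.sqrt (2 * π))⁻¹ * ∫ s in Set.Iic t, Real.exp (-s ^ 2 / 2)) :
    (∀ t : ℝ,
        (Real.sqrt (2 * π))⁻¹ * Real.exp (-t ^ 2 / 2) *
            (Real.sqrt (2 / π) * Real.exp (-t ^ 2 / 2) + 2 * t * Φ t - t) ≤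
          1 / π + 1 / Real.sqrt (2 * π * Real.exp 1)) ∧
      1 / π + 1 / Real.sqrt (2 * π * Real.exp 1) < 1 := by
  have hπ : (0:ℝ) < π := Real.pi_pos
  have hs2π : 0 < Real.sqrt (2*π) := Real.sqrt_pos.2 (by positivity)
  -- integrability of the Gaussian
  have hint : MeasureTheory.Integrable (fun s : ℝ => Real.exp (-s^2/2)) := by
    have h := integrable_exp_neg_mul_sq (by norm_num : (0:ℝ) < 1/2)
    convert h using 2 with s
    ring_nf
  -- full integral equals sqrt(2π)
  have htot : (∫ s : ℝ, Real.exp (-s^2/2)) = Real.sqrt (2*π) := by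
    have h := integral_gaussian (1/2 : ℝ)
    rw [show π / (1/2 : ℝ) = 2*π by ring] at h
    rw [← h]
    congr 1
    funext s
    ring_nf
  have hΦ0 : ∀ t, 0 ≤ Φ t := by
    intro t
    rw [hΦ]
    apply mul_nonneg (by positivity)
    apply MeasureTheory.integral_nonneg
    intro s
    positivity
  have hΦ1 : ∀ t, Φ t ≤ 1 := by
    intro t
    rw [hΦ]
    have h1 : (∫ s in Set.Iic t, Real.exp (-s^2/2)) ≤ ∫ s : ℝ, Real.exp (-s^2/2) :=
      MeasureTheory.setIntegral_le_integral hint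
        (Filter.Eventually.of_forall fun s => by positivity)
    calc (Real.sqrt (2*π))⁻¹ * ∫ s in Set.Iic t, Real.exp (-s^2/2)
        ≤ (Real.sqrt (2*π))⁻¹ * Real.sqrt (2*π) := by
          apply mul_le_mul_of_nonneg_left _ (by positivity)
          rw [← htot] at *
          exact h1
      _ = 1 := inv_mul_cancel₀ (ne_of_gt hs2π)
  have hsqrtexp : Real.sqrt (Real.exp 1) = Real.exp (2⁻¹) := by
    rw [show Real.exp 1 = Real.exp 2⁻¹ * Real.exp 2⁻¹ by rw [← Real.exp_add]; norm_num]
    exact Real.sqrt_mul_self (Real.exp_nonneg _)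
  have hsplit : Real.sqrt (2*π*Real.exp 1) = Real.sqrt (2*π) * Real.exp 2⁻¹ := by
    rw [Real.sqrt_mul (by positivity), hsqrtexp]
  -- numeric part
  have hπ3 : (3:ℝ) < π := Real.pi_gt_three
  have he : (2.7:ℝ) < Real.exp 1 := by
    have := Real.exp_one_gt_d9
    linarith
  have h16 : (16:ℝ) < 2*π*Real.exp 1 := by nlinarith
  have hsq4 : (4:ℝ) < Real.sqrt (2*π*Real.exp 1) := by
    rw [show (4:ℝ) = Real.sqrt 16 by
      rw [show (16:ℝ) = 4^2 by norm_num, Real.sqrt_sq (by norm_num : (0:ℝ) ≤ 4)]]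
    exact Real.sqrt_lt_sqrt (by norm_num) h16
  have hnum : 1 / π + 1 / Real.sqrt (2 * π * Real.exp 1) < 1 := by
    have h1 : 1/π < 1/3 := by
      rw [div_lt_div_iff₀ hπ (by norm_num)]
      linarith
    have h2 : 1 / Real.sqrt (2*π*Real.exp 1) < 1/4 := by
      rw [div_lt_div_iff₀ (by linarith) (by norm_num)]
      linarith
    linarith
  refine ⟨fun t => ?_, hnum⟩
  set c := (Real.sqrt (2*π))⁻¹ with hc
  set E := Real.exp (-t^2/2) with hE
  have hc0 : 0 < c := by positivity
  have hE0 : 0 < E := Real.exp_pos _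
  have hE1 : E ≤ 1 := Real.exp_le_one_iff.2 (by nlinarith [sq_nonneg t])
  -- first term bound
  have hcs : c * Real.sqrt (2/π) = 1/π := by
    rw [hc, ← Real.sqrt_inv, ← Real.sqrt_mul (by positivity)]
    rw [show (2*π)⁻¹ * (2/π) = (1/π)^2 by field_simp]
    exact Real.sqrt_sq (by positivity)
  have key1 : c * E * (Real.sqrt (2/π) * E) ≤ 1/π := by
    have : c * E * (Real.sqrt (2/π) * E) = (c * Real.sqrt (2/π)) * (E * E) := by ring
    rw [this, hcs]
    have hEE : E * E ≤ 1 := by nlinarith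
    calc 1/π * (E*E) ≤ 1/π * 1 := by
          apply mul_le_mul_of_nonneg_left hEE (by positivity)
      _ = 1/π := mul_one _
  -- second term bound
  have habs : 2 * t * Φ t - t ≤ |t| := by
    have h := abs_mul t (2 * Φ t - 1)
    have h2 : |2 * Φ t - 1| ≤ 1 := by
      rw [abs_le]
      constructor <;> [linarith [hΦ0 t]; linarith [hΦ1 t]]
    have h3 : |t * (2 * Φ t - 1)| ≤ |t| := by
      rw [h]
      nlinarith [abs_nonneg t]
    have h4 : t * (2 * Φ t - 1) ≤ |t| := le_trans (le_abs_self _) h3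
    nlinarith
  have htE : E * |t| ≤ Real.exp (-2⁻¹) := by
    have h1 : |t| ≤ Real.exp ((t^2-1)/2) := by
      have ha : (t^2+1)/2 ≤ Real.exp ((t^2-1)/2) := by
        nlinarith [Real.add_one_le_exp ((t^2-1)/2)]
      have hb : |t| ≤ (t^2+1)/2 := by nlinarith [sq_abs t, sq_nonneg (|t|-1)]
      linarith
    calc E * |t| ≤ E * Real.exp ((t^2-1)/2) :=
          mul_le_mul_of_nonneg_left h1 (le_of_lt hE0)
      _ = Real.exp (-2⁻¹) := by rw [hE, ← Real.exp_add]; ring_nf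
  have hcend : c * Real.exp (-2⁻¹) = 1 / Real.sqrt (2*π*Real.exp 1) := by
    rw [hsplit, hc, Real.exp_neg]
    field_simp
  have key2 : c * E * (2 * t * Φ t - t) ≤ 1 / Real.sqrt (2*π*Real.exp 1) := by
    calc c * E * (2 * t * Φ t - t) ≤ c * E * |t| := by
          apply mul_le_mul_of_nonneg_left habs (by positivity)
      _ = c * (E * |t|) := by ring
      _ ≤ c * Real.exp (-2⁻¹) := mul_le_mul_of_nonneg_left htE (le_of_lt hc0)
      _ = 1 / Real.sqrt (2*π*Real.exp 1) := hcend
  have hfinal : c * E * (Real.sqrt (2/π) * E + 2 * t * Φ t - t)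
      = c * E * (Real.sqrt (2/π) * E) + c * E * (2 * t * Φ t - t) := by ring
  rw [hfinal]
  exact add_le_add key1 key2
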